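/- Let V be a finite-dimensional complex vector space with a bilinear form φ, and let a ⊆ End(V) be spanned by an sl₂-triple (h,e,f) acting on V, such that each element of the Lie algebra so/sp defined by φ satisfies φ(xv,w) + φ(v,xw) = 0 for all v,w; in particular assume φ(ev,w) + φ(v,ew) = 0. For s ≥ 1 let M_s = {v ∈ V : f·v = 0 and h·v = (-s+1)v} (the space of lowest weight vectors of the isotypic component of dimension s). Define ψ_s on M_s by ψ_s(v,w) = φ(v, e^{s-1}·w). If φ is symmetric, then ψ_s is symmetric when s is odd and alternating when s is even. -/

import Mathlib

/-!
Since `e` is skew-adjoint for `φ`, moving `e ^ k` from one argument of `φ` to the other costs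
the sign `(-1) ^ k`; with the symmetry of `φ` this gives
`φ v (e ^ (s - 1) w) = (-1) ^ (s - 1) * φ w (e ^ (s - 1) v)`.
-/

namespace LinearMap

variable {R M N : Type*} [CommSemiring R] [AddCommMonoid M] [Module R M] [AddCommMonoid N]
  [Module R N] {B : M →ₗ[R] M →ₗ[R] N}

theorem IsAdjointPair.pow {f g : Module.End R M} (h : IsAdjointPair B B f g) :
    ∀ n : ℕ, IsAdjointPair B B ⇑(f ^ n) ⇑(g ^ n)
  | 0 => by simpa only [pow_zero] using isAdjointPair_one
  | n + 1 => by
    rw [pow_succ f, pow_succ' g]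
    exact (h.pow n).mul h

end LinearMap

namespace LinearMap.BilinForm

variable {R M : Type*} [CommRing R] [AddCommGroup M] [Module R M] {B : LinearMap.BilinForm R M}
  {e : Module.End R M}

theorem isAdjointPair_neg_of_apply_add_apply_eq_zero (he : ∀ v w, B (e v) w + B v (e w) = 0) :
    IsAdjointPair B B e ⇑(-e) := fun v w => by
  rw [LinearMap.neg_apply, map_neg, eq_neg_iff_add_eq_zero]
  exact he v w

theorem apply_pow_apply_eq_neg_one_pow_mul (he : ∀ v w, B (e v) w + B v (e w) = 0) (k : ℕ)
    (v w : M) : B ((e ^ k) v) w = (-1) ^ k * B v ((e ^ k) w) := by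
  rw [(isAdjointPair_neg_of_apply_add_apply_eq_zero he).pow k v w, ← neg_one_smul R e, smul_pow,
    LinearMap.smul_apply, map_smul, smul_eq_mul]

theorem apply_pow_apply_eq_neg_one_pow_mul_apply_pow_apply (hB : ∀ v w, B v w = B w v)
    (he : ∀ v w, B (e v) w + B v (e w) = 0) (k : ℕ) (v w : M) :
    B v ((e ^ k) w) = (-1) ^ k * B w ((e ^ k) v) := by
  rw [hB]
  exact apply_pow_apply_eq_neg_one_pow_mul he k w v

end LinearMap.BilinForm

attribute [local instance 100] LieRing.ofAssociativeRing

theorem stmt7_general {V : Type*} [AddCommGroup V] [Module ℂ V]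
    (e : Module.End ℂ V)
    (φ : LinearMap.BilinForm ℂ V) (hsymm : ∀ v w : V, φ v w = φ w v)
    (he : ∀ v w : V, φ (e v) w + φ v (e w) = 0)
    (M : ℕ → Set V) :
    ∀ s : ℕ, 1 ≤ s → ∀ v ∈ M s, ∀ w ∈ M s,
      (Odd s → φ v ((e ^ (s - 1)) w) = φ w ((e ^ (s - 1)) v)) ∧
      (Even s → φ v ((e ^ (s - 1)) w) = - φ w ((e ^ (s - 1)) v)) := by
  intro s hs v _ w _
  rw [LinearMap.BilinForm.apply_pow_apply_eq_neg_one_pow_mul_apply_pow_apply hsymm he]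
  refine ⟨fun hodd => ?_, fun heven => ?_⟩
  · rw [(Nat.Odd.sub_odd hodd odd_one).neg_one_pow, one_mul]
  · rw [(Nat.Even.sub_odd hs heven odd_one).neg_one_pow, neg_one_mul]

/-- Let `(h,e,f)` be an `sl₂`-triple of endomorphisms of a
finite-dimensional complex vector space `V` lying in the Lie algebra defined by a
symmetric nondegenerate bilinear form `φ` (so `φ(xv,w) + φ(v,xw) = 0` for `x = h,e,f`).
For `s ≥ 1` let `M_s = {v : f·v = 0, h·v = (1-s)·v}` be the space of lowest weight
vectors of the `s`-dimensional isotypic component and define `ψ_s(v,w) = φ(v, e^{s-1}·w)`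
on `M_s`.  Then `ψ_s` is symmetric when `s` is odd and alternating when `s` is even. -/
theorem stmt7 {V : Type*} [AddCommGroup V] [Module ℂ V] [FiniteDimensional ℂ V]
    (h e f : Module.End ℂ V) (t : IsSl2Triple h e f)
    (φ : LinearMap.BilinForm ℂ V) (hsymm : ∀ v w : V, φ v w = φ w v)
    (hnd : φ.Nondegenerate)
    (hh : ∀ v w : V, φ (h v) w + φ v (h w) = 0)
    (he : ∀ v w : V, φ (e v) w + φ v (e w) = 0)
    (hf : ∀ v w : V, φ (f v) w + φ v (f w) = 0)
    (M : ℕ → Set V)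
    (hM : ∀ s, M s = {v : V | f v = 0 ∧ h v = ((1 : ℂ) - (s : ℂ)) • v}) :
    ∀ s : ℕ, 1 ≤ s → ∀ v ∈ M s, ∀ w ∈ M s,
      (Odd s → φ v ((e ^ (s - 1)) w) = φ w ((e ^ (s - 1)) v)) ∧
      (Even s → φ v ((e ^ (s - 1)) w) = - φ w ((e ^ (s - 1)) v)) :=
  stmt7_general e φ hsymm he M
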